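/- Let E be a complete normed space and f : [a,b] → E. Define the semivariation A(f, δ) = sup ‖∑_j c_j (f(t_j) - f(t_{j-1}))‖ over all finite partitions a = t₀ < ⋯ < t_n = b and all coefficients |c_j| ≤ δ. If lim_{δ→0} A(f, δ) = 0, then for every φ ∈ D⁻[a,b] the Riemann integral ∫_a^b φ(t) f(t) dt exists (i.e., f ∈ 𝓡_m([a,b], E)). -/

import Mathlib

/-!
Summation by parts along a subdivision `s` through all the tags writes a Riemann sum of `φ • f`
as `c₀ • f a + ∑ₖ cₖ • (f sₖ₊₁ - f sₖ)`, where `cₖ = ∑_{ξᵢ ≥ sₖ₊₁} φ(ξᵢ) Δtᵢ` is a tail sum of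
`φ`. A function in `D⁻[a, b]` is a uniform limit of step functions, and for step functions the
tail sums converge uniformly in the cut point as the mesh tends to `0`. Hence for two fine tagged
subdivisions the coefficients of the difference of their Riemann sums are uniformly small, the
semivariation hypothesis makes that difference small, and completeness of `E` gives the integral.
-/

/-- `f` has Riemann integral `I` over `[a,b]`: Riemann sums over tagged partitions
converge to `I` as the mesh tends to `0`. -/
def HasRiemannIntegral {E : Type*} [NormedAddCommGroup E] [NormedSpace ℝ E]
    (f : ℝ → E) (a b : ℝ) (I : E) : Prop :=
  ∀ ε : ℝ, 0 < ε → ∃ δ : ℝ, 0 < δ ∧ ∀ (n : ℕ) (t ξ : ℕ → ℝ),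
    0 < n → t 0 = a → t n = b →
    (∀ i < n, t i < t (i + 1)) →
    (∀ i < n, t (i + 1) - t i < δ) →
    (∀ i < n, ξ i ∈ Set.Icc (t i) (t (i + 1))) →
    ‖(∑ i ∈ Finset.range n, (t (i + 1) - t i) • f (ξ i)) - I‖ < ε

/-- `φ ∈ D⁻[a,b]`: left-continuous on `(a,b]` with right-hand limits on `[a,b)`. -/
def MemDminus (a b : ℝ) (φ : ℝ → ℝ) : Prop :=
  (∀ x ∈ Set.Ioc a b, Filter.Tendsto φ (nhdsWithin x (Set.Iio x)) (nhds (φ x))) ∧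
  (∀ x ∈ Set.Ico a b, ∃ L : ℝ, Filter.Tendsto φ (nhdsWithin x (Set.Ioi x)) (nhds L))

open Set Filter

/-- The length of `[p, q] ∩ [x, y]`. -/
def overlap (p q x y : ℝ) : ℝ := max 0 (min q y - max p x)

lemma overlap_nonneg (p q x y : ℝ) : 0 ≤ overlap p q x y := le_max_left _ _

lemma overlap_le_sub_left {p q x y : ℝ} (hpq : p ≤ q) : overlap p q x y ≤ q - p :=
  max_le (by linarith) (by linarith [min_le_left q y, le_max_left p x])

lemma overlap_le_sub_right {p q x y : ℝ} (hxy : x ≤ y) : overlap p q x y ≤ y - x :=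
  max_le (by linarith) (by linarith [min_le_right q y, le_max_right p x])

lemma overlap_eq_sub {p q x y : ℝ} (hp : p ≤ x) (hq : y ≤ q) (hxy : x ≤ y) :
    overlap p q x y = y - x := by
  rw [overlap, min_eq_right hq, max_eq_right hp, max_eq_right (by linarith)]

lemma overlap_eq_zero_of_le_left {p q x y : ℝ} (h : y ≤ p) : overlap p q x y = 0 :=
  max_eq_left (by linarith [min_le_right q y, le_max_left p x])

lemma overlap_eq_zero_of_le_right {p q x y : ℝ} (h : q ≤ x) : overlap p q x y = 0 :=
  max_eq_left (by linarith [min_le_left q y, le_max_right p x])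

lemma overlap_eq_clamp_sub {p q x y : ℝ} (hpq : p ≤ q) (hxy : x ≤ y) :
    overlap p q x y = max p (min q y) - max p (min q x) := by
  unfold overlap
  rcases le_total y q with h1 | h1 <;> rcases le_total x p with h2 | h2 <;>
    rcases le_total x q with h3 | h3 <;> rcases le_total y p with h4 | h4 <;>
    simp only [max_def, min_def] <;> split_ifs <;> linarith

/-- The indicator at the tag and the exact overlap can differ only if `[x, y]` contains an
endpoint of `J`, and then `[x, y]` lies in the `δ`-window around that endpoint. -/
lemma abs_mul_indicator_sub_overlap_le {x y ξ δ α β : ℝ} {J : Set ℝ} (hξ : ξ ∈ Icc x y)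
    (hδ : y - x ≤ δ) (hJ : Ioo α β ⊆ J) (hJ' : J ⊆ Icc α β) :
    |(y - x) * J.indicator 1 ξ - overlap α β x y| ≤
      overlap (α - δ) (α + δ) x y + overlap (β - δ) (β + δ) x y := by
  have hxy : x ≤ y := hξ.1.trans hξ.2
  have hind : J.indicator (1 : ℝ → ℝ) ξ ∈ Icc (0 : ℝ) 1 := by
    by_cases h : ξ ∈ J <;> simp [h]
  have hle : |(y - x) * J.indicator 1 ξ - overlap α β x y| ≤ y - x :=
    abs_sub_le_of_nonneg_of_le (mul_nonneg (sub_nonneg.2 hxy) hind.1)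
      (mul_le_of_le_one_right (sub_nonneg.2 hxy) hind.2) (overlap_nonneg ..)
      (overlap_le_sub_right hxy)
  have hα' := overlap_nonneg (α - δ) (α + δ) x y
  have hβ' := overlap_nonneg (β - δ) (β + δ) x y
  by_cases hα : α ∈ Icc x y
  · rw [overlap_eq_sub (p := α - δ) (q := α + δ) (by linarith [hα.2]) (by linarith [hα.1]) hxy]
    linarith
  by_cases hβ : β ∈ Icc x y
  · rw [overlap_eq_sub (p := β - δ) (q := β + δ) (by linarith [hβ.2]) (by linarith [hβ.1]) hxy]
    linarith
  suffices (y - x) * J.indicator 1 ξ = overlap α β x y by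
    rw [this, sub_self, abs_zero]
    linarith
  simp only [mem_Icc, not_and_or, not_le] at hα hβ
  rcases hα with hα | hα
  · rcases hβ with hβ | hβ
    · rw [indicator_of_notMem (fun h => by linarith [(hJ' h).2, hξ.1]),
        overlap_eq_zero_of_le_right hβ.le, mul_zero]
    · rw [indicator_of_mem (hJ ⟨by linarith [hξ.1], by linarith [hξ.2]⟩),
        overlap_eq_sub hα.le hβ.le hxy, Pi.one_apply, mul_one]
  · rw [indicator_of_notMem (fun h => by linarith [(hJ' h).1, hξ.2]),
      overlap_eq_zero_of_le_left hα.le, mul_zero]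

structure Subdivision (a b : ℝ) where
  n : ℕ
  t : ℕ → ℝ
  t_zero : t 0 = a
  t_last : t n = b
  lt_succ : ∀ i < n, t i < t (i + 1)

structure TaggedSubdivision (a b : ℝ) extends Subdivision a b where
  ξ : ℕ → ℝ
  tag_mem : ∀ i < n, ξ i ∈ Icc (t i) (t (i + 1))

namespace Subdivision

variable {a b : ℝ} (P : Subdivision a b)

def IsFine (δ : ℝ) : Prop := ∀ i < P.n, P.t (i + 1) - P.t i < δ

lemma IsFine.mono {P : Subdivision a b} {δ δ' : ℝ} (h : P.IsFine δ) (hδ : δ ≤ δ') :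
    P.IsFine δ' :=
  fun i hi => (h i hi).trans_le hδ

lemma strictMonoOn : StrictMonoOn P.t (Iic P.n) :=
  strictMonoOn_Iic_of_lt_succ fun i hi => by simpa [Order.succ_eq_add_one] using P.lt_succ i hi

lemma left_le_right (P : Subdivision a b) : a ≤ b := by
  simpa [P.t_zero, P.t_last] using
    P.strictMonoOn.monotoneOn (Nat.zero_le P.n) (le_refl P.n) (Nat.zero_le P.n)

lemma mem_Icc {k : ℕ} (hk : k ≤ P.n) : P.t k ∈ Icc a b := by
  have hmono := P.strictMonoOn.monotoneOn
  refine ⟨?_, ?_⟩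
  · simpa [P.t_zero] using hmono (Nat.zero_le P.n) hk (Nat.zero_le k)
  · simpa [P.t_last] using hmono hk (le_refl P.n) hk

lemma sum_overlap (p q : ℝ) :
    ∑ i ∈ Finset.range P.n, overlap p q (P.t i) (P.t (i + 1)) = overlap p q a b := by
  rcases le_total p q with hpq | hqp
  · rw [Finset.sum_congr rfl fun i hi =>
        overlap_eq_clamp_sub hpq (P.lt_succ i (Finset.mem_range.1 hi)).le,
      Finset.sum_range_sub (fun i => max p (min q (P.t i))), P.t_zero, P.t_last,
      overlap_eq_clamp_sub hpq P.left_le_right]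
  · have h0 : ∀ x y, overlap p q x y = 0 := fun x y =>
      max_eq_left (by linarith [min_le_left q y, le_max_left p x])
    simp [h0]

lemma sum_filter_le_sub {E : Type*} [AddCommGroup E] (g : ℕ → E) {k₀ : ℕ} (hk₀ : k₀ ≤ P.n) :
    ∑ k ∈ (Finset.range P.n).filter (fun k => P.t (k + 1) ≤ P.t k₀), (g (k + 1) - g k) =
      g k₀ - g 0 := by
  have : (Finset.range P.n).filter (fun k => P.t (k + 1) ≤ P.t k₀) = Finset.range k₀ := by
    ext k
    simp only [Finset.mem_filter, Finset.mem_range]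
    constructor
    · rintro ⟨hk, hle⟩
      have := (P.strictMonoOn.le_iff_le (mem_Iic.2 hk) (mem_Iic.2 hk₀)).1 hle
      omega
    · intro hk
      exact ⟨by omega, (P.strictMonoOn.le_iff_le (mem_Iic.2 (by omega)) (mem_Iic.2 hk₀)).2 hk⟩
  rw [this, Finset.sum_range_sub]

lemma exists_of_finset (F : Finset ℝ) (hF : ∀ x ∈ F, x ∈ Icc a b) (ha : a ∈ F) (hb : b ∈ F) :
    ∃ Q : Subdivision a b, ∀ x ∈ F, ∃ k ≤ Q.n, Q.t k = x := by
  have hpos : 0 < F.card := Finset.card_pos.2 ⟨a, ha⟩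
  set e := F.orderEmbOfFin rfl
  let t : ℕ → ℝ := fun k => if h : k < F.card then e ⟨k, h⟩ else b
  have ht : ∀ k (h : k < F.card), t k = e ⟨k, h⟩ := fun k h => dif_pos h
  refine ⟨⟨F.card - 1, t, ?_, ?_, ?_⟩, ?_⟩
  · rw [ht 0 hpos, Finset.orderEmbOfFin_zero rfl hpos]
    exact le_antisymm (F.min'_le a ha) (F.le_min' _ a fun x hx => (hF x hx).1)
  · rw [ht _ (by omega), Finset.orderEmbOfFin_last rfl hpos]
    exact le_antisymm (F.max'_le _ b fun x hx => (hF x hx).2) (F.le_max' b hb)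
  · intro i hi
    rw [ht i (by omega), ht (i + 1) (by omega)]
    exact e.strictMono (Fin.mk_lt_mk.2 (Nat.lt_succ_self i))
  · intro x hx
    rw [← Finset.mem_coe, ← F.range_orderEmbOfFin rfl] at hx
    obtain ⟨⟨k, hk⟩, rfl⟩ := hx
    exact ⟨k, Nat.le_sub_one_of_lt hk, ht k hk⟩

end Subdivision

namespace TaggedSubdivision

variable {a b : ℝ} {E : Type*} [NormedAddCommGroup E] [NormedSpace ℝ E]
  (P : TaggedSubdivision a b)

lemma tag_mem_Icc {i : ℕ} (hi : i < P.n) : P.ξ i ∈ Icc a b :=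
  ⟨(P.mem_Icc hi.le).1.trans (P.tag_mem i hi).1, (P.tag_mem i hi).2.trans (P.mem_Icc hi).2⟩

lemma exists_isFine (hab : a < b) {δ : ℝ} (hδ : 0 < δ) :
    ∃ P : TaggedSubdivision a b, P.IsFine δ := by
  obtain ⟨N, hN⟩ := exists_nat_gt ((b - a) / δ)
  have hN1 : (0 : ℝ) < N + 1 := by positivity
  set h := (b - a) / (N + 1)
  have hh : 0 < h := div_pos (by linarith) hN1
  have hhδ : h < δ := by
    rw [div_lt_iff₀ hN1]
    rw [div_lt_iff₀ hδ] at hN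
    linarith
  refine ⟨⟨⟨N + 1, fun i => a + i * h, by simp, ?_, fun i _ => ?_⟩, fun i => a + i * h,
    fun i _ => ⟨le_rfl, ?_⟩⟩, fun i _ => ?_⟩
  · push_cast
    rw [mul_div_cancel₀ _ hN1.ne']
    ring
  all_goals push_cast; linarith

def riemannSum (g : ℝ → E) : E := ∑ i ∈ Finset.range P.n, (P.t (i + 1) - P.t i) • g (P.ξ i)

lemma riemannSum_sub (g h : ℝ → E) :
    P.riemannSum g - P.riemannSum h = P.riemannSum (g - h) := by
  simp only [riemannSum, ← Finset.sum_sub_distrib, Pi.sub_apply, smul_sub]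

lemma norm_riemannSum_le {g : ℝ → E} {C : ℝ} (hg : ∀ x ∈ Icc a b, ‖g x‖ ≤ C) :
    ‖P.riemannSum g‖ ≤ C * (b - a) := by
  calc ‖P.riemannSum g‖ ≤ ∑ i ∈ Finset.range P.n, (P.t (i + 1) - P.t i) * C := by
        refine (_root_.norm_sum_le _ _).trans (Finset.sum_le_sum fun i hi => ?_)
        have hΔ := sub_nonneg.2 (P.lt_succ i (Finset.mem_range.1 hi)).le
        rw [norm_smul, Real.norm_of_nonneg hΔ]
        exact mul_le_mul_of_nonneg_left (hg _ (P.tag_mem_Icc (Finset.mem_range.1 hi))) hΔ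
    _ = C * (b - a) := by
        rw [← Finset.sum_mul, Finset.sum_range_sub, P.t_zero, P.t_last, mul_comm]

lemma riemannSum_indicator_Ici_left (g : ℝ → E) :
    P.riemannSum ((Ici a).indicator g) = P.riemannSum g :=
  Finset.sum_congr rfl fun i hi => by
    rw [indicator_of_mem (show P.ξ i ∈ Ici a from (P.tag_mem_Icc (Finset.mem_range.1 hi)).1)]

lemma abs_riemannSum_indicator_sub_overlap_le {δ : ℝ} (hδ : 0 ≤ δ) (hP : P.IsFine δ)
    {J : Set ℝ} {α β : ℝ} (hJ : Ioo α β ⊆ J) (hJ' : J ⊆ Icc α β) :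
    |P.riemannSum (J.indicator 1) - overlap α β a b| ≤ 4 * δ := by
  rw [← P.sum_overlap α β, riemannSum, ← Finset.sum_sub_distrib]
  calc _ ≤ ∑ i ∈ Finset.range P.n, (overlap (α - δ) (α + δ) (P.t i) (P.t (i + 1)) +
        overlap (β - δ) (β + δ) (P.t i) (P.t (i + 1))) := by
        refine (Finset.abs_sum_le_sum_abs _ _).trans (Finset.sum_le_sum fun i hi => ?_)
        have hi := Finset.mem_range.1 hi
        exact abs_mul_indicator_sub_overlap_le (P.tag_mem i hi) (hP i hi).le hJ hJ'
    _ = overlap (α - δ) (α + δ) a b + overlap (β - δ) (β + δ) a b := by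
        rw [Finset.sum_add_distrib, P.sum_overlap, P.sum_overlap]
    _ ≤ 4 * δ := by
        linarith [overlap_le_sub_left (x := a) (y := b) (by linarith : α - δ ≤ α + δ),
          overlap_le_sub_left (x := a) (y := b) (by linarith : β - δ ≤ β + δ)]

lemma riemannSum_smul_by_parts (Q : Subdivision a b) (hQ : ∀ i < P.n, ∃ k ≤ Q.n, Q.t k = P.ξ i)
    (φ : ℝ → ℝ) (f : ℝ → E) :
    P.riemannSum (fun x => φ x • f x) = P.riemannSum φ • f a + ∑ k ∈ Finset.range Q.n,
      P.riemannSum ((Ici (Q.t (k + 1))).indicator φ) • (f (Q.t (k + 1)) - f (Q.t k)) := by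
  have htele : ∀ i < P.n, ∑ k ∈ Finset.range Q.n,
      (Ici (Q.t (k + 1))).indicator φ (P.ξ i) • (f (Q.t (k + 1)) - f (Q.t k)) =
        φ (P.ξ i) • (f (P.ξ i) - f a) := by
    intro i hi
    obtain ⟨k₀, hk₀, hk⟩ := hQ i hi
    simp_rw [indicator_apply, mem_Ici, ite_smul, zero_smul]
    rw [← Finset.sum_filter, ← hk, ← Finset.smul_sum,
      Q.sum_filter_le_sub (fun k => f (Q.t k)) hk₀, Q.t_zero]
  calc P.riemannSum (fun x => φ x • f x)
      = ∑ i ∈ Finset.range P.n, ((P.t (i + 1) - P.t i) • φ (P.ξ i)) • f a +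
        ∑ i ∈ Finset.range P.n, (P.t (i + 1) - P.t i) • (φ (P.ξ i) • (f (P.ξ i) - f a)) := by
        rw [← Finset.sum_add_distrib]
        refine Finset.sum_congr rfl fun i _ => ?_
        rw [smul_assoc, ← smul_add, ← smul_add, add_sub_cancel]
    _ = P.riemannSum φ • f a + ∑ i ∈ Finset.range P.n, (P.t (i + 1) - P.t i) •
          ∑ k ∈ Finset.range Q.n,
            (Ici (Q.t (k + 1))).indicator φ (P.ξ i) • (f (Q.t (k + 1)) - f (Q.t k)) := by
        rw [riemannSum, Finset.sum_smul]
        congr 1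
        exact Finset.sum_congr rfl fun i hi => by rw [htele i (Finset.mem_range.1 hi)]
    _ = _ := by
        simp_rw [riemannSum, Finset.smul_sum, Finset.sum_smul, smul_smul, smul_eq_mul]
        rw [Finset.sum_comm]

theorem norm_riemannSum_smul_sub_lt {f : ℝ → E} {φ : ℝ → ℝ} {η ε : ℝ}
    (hf : ∀ (Q : Subdivision a b) (c : ℕ → ℝ), (∀ i < Q.n, |c i| ≤ η) →
      ‖∑ i ∈ Finset.range Q.n, c i • (f (Q.t (i + 1)) - f (Q.t i))‖ < ε)
    (P' : TaggedSubdivision a b)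
    (hPP' : ∀ s, |P.riemannSum ((Ici s).indicator φ) - P'.riemannSum ((Ici s).indicator φ)| ≤ η) :
    ‖P.riemannSum (fun x => φ x • f x) - P'.riemannSum (fun x => φ x • f x)‖ <
      η * ‖f a‖ + ε := by
  set F := insert a (insert b ((Finset.range P.n).image P.ξ ∪ (Finset.range P'.n).image P'.ξ))
  have hF : ∀ x ∈ F, x ∈ Icc a b := by
    simp only [F, Finset.mem_insert, Finset.mem_union, Finset.mem_image, Finset.mem_range]
    rintro x (rfl | rfl | ⟨i, hi, rfl⟩ | ⟨i, hi, rfl⟩)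
    exacts [⟨le_rfl, P.left_le_right⟩, ⟨P.left_le_right, le_rfl⟩, P.tag_mem_Icc hi,
      P'.tag_mem_Icc hi]
  obtain ⟨Q, hQ⟩ := Subdivision.exists_of_finset F hF (by simp [F]) (by simp [F])
  rw [P.riemannSum_smul_by_parts Q (fun i hi => hQ _ (by simp [F]; grind)) φ f,
    P'.riemannSum_smul_by_parts Q (fun i hi => hQ _ (by simp [F]; grind)) φ f,
    add_sub_add_comm, ← sub_smul, ← Finset.sum_sub_distrib]
  simp_rw [← sub_smul]
  have hfa : ‖(P.riemannSum φ - P'.riemannSum φ) • f a‖ ≤ η * ‖f a‖ := by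
    rw [norm_smul, Real.norm_eq_abs, ← P.riemannSum_indicator_Ici_left,
      ← P'.riemannSum_indicator_Ici_left]
    exact mul_le_mul_of_nonneg_right (hPP' a) (norm_nonneg _)
  exact (norm_add_le _ _).trans_lt (add_lt_add_of_le_of_lt hfa (hf Q _ fun k _ => hPP' _))

end TaggedSubdivision

theorem hasRiemannIntegral_of_cauchy {a b : ℝ} {E : Type*} [NormedAddCommGroup E]
    [NormedSpace ℝ E] [CompleteSpace E] (hab : a < b) {g : ℝ → E}
    (hg : ∀ ε > 0, ∃ δ > 0, ∀ P Q : TaggedSubdivision a b, P.IsFine δ → Q.IsFine δ →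
      ‖P.riemannSum g - Q.riemannSum g‖ < ε) :
    ∃ I, HasRiemannIntegral g a b I := by
  choose P hP using fun N : ℕ =>
    TaggedSubdivision.exists_isFine hab (Nat.one_div_pos_of_nat (α := ℝ) (n := N))
  have hfine : ∀ δ > 0, ∀ᶠ N in atTop, (P N).IsFine δ := fun δ hδ =>
    (tendsto_one_div_add_atTop_nhds_zero_nat.eventually (gt_mem_nhds hδ)).mono
      fun N hN => (hP N).mono hN.le
  have hcauchy : CauchySeq fun N => (P N).riemannSum g := by
    refine Metric.cauchySeq_iff'.2 fun ε hε => ?_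
    obtain ⟨δ, hδ, h⟩ := hg ε hε
    obtain ⟨N₀, hN₀⟩ := eventually_atTop.1 (hfine δ hδ)
    exact ⟨N₀, fun N hN => by rw [dist_eq_norm]; exact h _ _ (hN₀ N hN) (hN₀ N₀ le_rfl)⟩
  obtain ⟨I, hI⟩ := cauchySeq_tendsto_of_complete hcauchy
  refine ⟨I, fun ε hε => ?_⟩
  obtain ⟨δ, hδ, h⟩ := hg (ε / 2) (half_pos hε)
  refine ⟨δ, hδ, fun n t ξ _ ht0 htn hlt hmesh htag => ?_⟩
  obtain ⟨N, hN, hNI⟩ :=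
    ((hfine δ hδ).and ((Metric.tendsto_nhds.1 hI) (ε / 2) (half_pos hε))).exists
  let R : TaggedSubdivision a b := ⟨⟨n, t, ht0, htn, hlt⟩, ξ, htag⟩
  calc ‖R.riemannSum g - I‖
      ≤ ‖R.riemannSum g - (P N).riemannSum g‖ + ‖(P N).riemannSum g - I‖ :=
        norm_sub_le_norm_sub_add_norm_sub _ _ _
    _ < ε / 2 + ε / 2 := add_lt_add (h R (P N) hmesh hN) (by rwa [← dist_eq_norm])
    _ = ε := add_halves ε

structure StepFunction where
  K : ℕ
  J : Fin K → Set ℝ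
  c : Fin K → ℝ
  exists_Ioo_subset_Icc : ∀ k, ∃ α β, Ioo α β ⊆ J k ∧ J k ⊆ Icc α β

namespace StepFunction

noncomputable def toFun (g : StepFunction) (x : ℝ) : ℝ := ∑ k, g.c k * (g.J k).indicator 1 x

noncomputable instance : CoeFun StepFunction fun _ => ℝ → ℝ := ⟨toFun⟩

def zero : StepFunction := ⟨0, Fin.elim0, Fin.elim0, fun k => k.elim0⟩

def cons (g : StepFunction) (I : Set ℝ) (hI : ∃ α β, Ioo α β ⊆ I ∧ I ⊆ Icc α β) (c : ℝ) :
    StepFunction :=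
  ⟨g.K + 1, Fin.cons I g.J, Fin.cons c g.c, Fin.cases hI g.exists_Ioo_subset_Icc⟩

lemma cons_apply (g : StepFunction) (I : Set ℝ) (hI : ∃ α β, Ioo α β ⊆ I ∧ I ⊆ Icc α β)
    (c x : ℝ) : g.cons I hI c x = c * I.indicator 1 x + g x := by
  show ∑ k : Fin (g.K + 1), _ = _
  simp [Fin.sum_univ_succ, cons, toFun]

lemma apply_eq_zero {g : StepFunction} {x : ℝ} (h : ∀ k, x ∉ g.J k) : g x = 0 :=
  Finset.sum_eq_zero fun k _ => by rw [indicator_of_notMem (h k), mul_zero]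

theorem exists_tail_approx (g : StepFunction) (a b : ℝ) :
    ∃ G : ℝ → ℝ, ∀ δ, 0 ≤ δ → ∀ P : TaggedSubdivision a b, P.IsFine δ → ∀ s,
      |P.riemannSum ((Ici s).indicator g) - G s| ≤ 4 * δ * ∑ k, |g.c k| := by
  choose α β hJ hJ' using g.exists_Ioo_subset_Icc
  refine ⟨fun s => ∑ k, g.c k * overlap (max (α k) s) (β k) a b, fun δ hδ P hP s => ?_⟩
  have hind : (Ici s).indicator g = fun x => ∑ k, g.c k * (g.J k ∩ Ici s).indicator 1 x := by
    ext x
    by_cases hx : x ∈ Ici s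
    · rw [indicator_of_mem hx]
      refine Finset.sum_congr rfl fun k _ => ?_
      rw [inter_indicator_one, Pi.mul_apply, indicator_of_mem hx, Pi.one_apply, mul_one]
    · simp [hx]
  have hsum : P.riemannSum ((Ici s).indicator g) =
      ∑ k, g.c k * P.riemannSum ((g.J k ∩ Ici s).indicator 1) := by
    simp only [hind, TaggedSubdivision.riemannSum, smul_eq_mul, Finset.mul_sum]
    rw [Finset.sum_comm]
    exact Finset.sum_congr rfl fun i _ => Finset.sum_congr rfl fun k _ => by ring
  rw [hsum, ← Finset.sum_sub_distrib, mul_comm, Finset.sum_mul]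
  refine (Finset.abs_sum_le_sum_abs _ _).trans (Finset.sum_le_sum fun k _ => ?_)
  rw [← mul_sub, abs_mul]
  refine mul_le_mul_of_nonneg_left
    (P.abs_riemannSum_indicator_sub_overlap_le hδ hP ?_ ?_) (abs_nonneg _)
  · exact fun x hx =>
      ⟨hJ k ⟨(le_max_left _ _).trans_lt hx.1, hx.2⟩, (le_max_right _ _).trans hx.1.le⟩
  · exact fun x hx => ⟨max_le (hJ' k hx.1).1 hx.2, (hJ' k hx.1).2⟩

end StepFunction

namespace MemDminus

variable {a b : ℝ} {φ : ℝ → ℝ}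

lemma exists_Ioo_abs_sub_le_left (hφ : MemDminus a b φ) {x ε : ℝ} (hx : x ∈ Ioc a b)
    (hε : 0 < ε) : ∃ z < x, ∀ w ∈ Ioo z x, |φ w - φ x| ≤ ε := by
  obtain ⟨z, hz, hsub⟩ :=
    mem_nhdsLT_iff_exists_Ioo_subset.1 (hφ.1 x hx (Metric.closedBall_mem_nhds (φ x) hε))
  exact ⟨z, hz, fun w hw => by simpa [Real.dist_eq] using hsub hw⟩

lemma exists_Ioc_abs_sub_le_right (hφ : MemDminus a b φ) {x ε : ℝ} (hx : x ∈ Ico a b)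
    (hε : 0 < ε) : ∃ y ∈ Ioc x b, ∀ w ∈ Ioc x y, |φ w - φ y| ≤ ε := by
  obtain ⟨L, hL⟩ := hφ.2 x hx
  obtain ⟨u, hu, hsub⟩ :=
    mem_nhdsGT_iff_exists_Ioo_subset.1 (hL (Metric.closedBall_mem_nhds L (half_pos hε)))
  obtain ⟨y, hxy, hy⟩ := exists_between (lt_min hu hx.2)
  have hL' : ∀ w ∈ Ioc x y, |φ w - L| ≤ ε / 2 := fun w hw => by
    simpa [Real.dist_eq] using hsub ⟨hw.1, hw.2.trans_lt (hy.trans_le (min_le_left _ _))⟩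
  refine ⟨y, ⟨hxy, hy.le.trans (min_le_right _ _)⟩, fun w hw => ?_⟩
  have := hL' y ⟨hxy, le_rfl⟩
  calc |φ w - φ y| ≤ |φ w - L| + |L - φ y| := abs_sub_le _ _ _
    _ ≤ ε := by rw [abs_sub_comm L]; linarith [hL' w hw]

/-- The supremum of the points up to which such an approximation exists is attained by left
continuity, and it is `b` because right limits exist. -/
theorem exists_stepFunction_approx (hab : a ≤ b) (hφ : MemDminus a b φ) {ε : ℝ} (hε : 0 < ε) :
    ∃ g : StepFunction, ∀ x ∈ Icc a b, |φ x - g x| ≤ ε := by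
  set S := {x ∈ Icc a b | ∃ g : StepFunction, (∀ k, g.J k ⊆ Iic x) ∧
    ∀ w ∈ Icc a x, |φ w - g w| ≤ ε}
  have extend : ∀ x ∈ S, ∀ y ∈ Ioc x b, (∀ w ∈ Ioc x y, |φ w - φ y| ≤ ε) → y ∈ S := by
    rintro x ⟨hx, g, hgJ, hg⟩ y hy hosc
    refine ⟨⟨hx.1.trans hy.1.le, hy.2⟩,
      g.cons (Ioc x y) ⟨x, y, Ioo_subset_Ioc_self, Ioc_subset_Icc_self⟩ (φ y), fun k => ?_,
      fun w hw => ?_⟩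
    · cases k using Fin.cases
      exacts [fun w hw => hw.2, (hgJ _).trans (Iic_subset_Iic.2 hy.1.le)]
    rw [StepFunction.cons_apply]
    rcases le_or_gt w x with hwx | hxw
    · rw [indicator_of_notMem (fun h => hwx.not_gt h.1), mul_zero, zero_add]
      exact hg w ⟨hw.1, hwx⟩
    · rw [indicator_of_mem (show w ∈ Ioc x y from ⟨hxw, hw.2⟩),
        StepFunction.apply_eq_zero fun k h => hxw.not_ge (hgJ k h), Pi.one_apply, mul_one,
        add_zero]
      exact hosc w ⟨hxw, hw.2⟩
  have ha : a ∈ S := by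
    refine ⟨⟨le_rfl, hab⟩, StepFunction.zero.cons (Icc a a) ⟨a, a, by simp, subset_rfl⟩ (φ a),
      fun k => ?_, fun w hw => ?_⟩
    · cases k using Fin.cases
      exacts [fun w hw => hw.2, Fin.elim0 ‹_›]
    rw [StepFunction.cons_apply, indicator_of_mem hw, StepFunction.apply_eq_zero fun k => k.elim0,
      le_antisymm hw.2 hw.1]
    simp [hε.le]
  have hbdd : BddAbove S := ⟨b, fun x hx => hx.1.2⟩
  have hSne : S.Nonempty := ⟨a, ha⟩
  have hc : sSup S ∈ Icc a b := ⟨le_csSup hbdd ha, csSup_le hSne fun x hx => hx.1.2⟩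
  have hcS : sSup S ∈ S := by
    rcases hc.1.eq_or_lt with hac | hac
    · rwa [← hac]
    obtain ⟨z, hzc, hz⟩ := hφ.exists_Ioo_abs_sub_le_left ⟨hac, hc.2⟩ hε
    obtain ⟨x, hxS, hzx⟩ := exists_lt_of_lt_csSup hSne hzc
    rcases (le_csSup hbdd hxS).eq_or_lt with hxc | hxc
    · rwa [← hxc]
    refine extend x hxS _ ⟨hxc, hc.2⟩ fun w hw => ?_
    rcases hw.2.eq_or_lt with rfl | hwc
    · simp [hε.le]
    · exact hz w ⟨hzx.trans hw.1, hwc⟩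
  have hcb : sSup S = b := by
    by_contra hcb
    obtain ⟨y, hy, hosc⟩ := hφ.exists_Ioc_abs_sub_le_right ⟨hc.1, lt_of_le_of_ne hc.2 hcb⟩ hε
    exact (le_csSup hbdd (extend _ hcS y hy hosc)).not_gt hy.1
  obtain ⟨-, g, -, hg⟩ := hcb ▸ hcS
  exact ⟨g, hg⟩

theorem exists_tail_approx (hab : a ≤ b) (hφ : MemDminus a b φ) {ε : ℝ} (hε : 0 < ε) :
    ∃ δ > 0, ∃ G : ℝ → ℝ, ∀ P : TaggedSubdivision a b, P.IsFine δ → ∀ s,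
      |P.riemannSum ((Ici s).indicator φ) - G s| ≤ ε := by
  have hba : 0 < b - a + 1 := by linarith
  obtain ⟨g, hg⟩ := hφ.exists_stepFunction_approx hab (ε := ε / (2 * (b - a + 1))) (by positivity)
  obtain ⟨G, hG⟩ := g.exists_tail_approx a b
  set C := ∑ k, |g.c k|
  have hC : 0 ≤ C := Finset.sum_nonneg fun k _ => abs_nonneg _
  refine ⟨ε / (8 * (C + 1)), by positivity, G, fun P hP s => ?_⟩
  have hφg : |P.riemannSum ((Ici s).indicator φ) - P.riemannSum ((Ici s).indicator g)| ≤
      ε / 2 := by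
    rw [P.riemannSum_sub, ← indicator_sub', ← Real.norm_eq_abs]
    refine (P.norm_riemannSum_le (C := ε / (2 * (b - a + 1))) fun x hx => ?_).trans ?_
    · rw [Real.norm_eq_abs, indicator_apply]
      split_ifs
      exacts [hg x hx, by simp; positivity]
    · rw [div_mul_eq_mul_div, div_le_div_iff₀ (by positivity) (by norm_num)]
      nlinarith
  have hgG := hG _ (by positivity) P hP s
  have hδC : 4 * (ε / (8 * (C + 1))) * C ≤ ε / 2 := by
    rw [show 4 * (ε / (8 * (C + 1))) * C = ε / 2 * (C / (C + 1)) by field_simp; ring]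
    exact mul_le_of_le_one_right (by positivity) ((div_le_one (by positivity)).2 (by linarith))
  calc _ ≤ |P.riemannSum ((Ici s).indicator φ) - P.riemannSum ((Ici s).indicator g)| +
        |P.riemannSum ((Ici s).indicator g) - G s| := abs_sub_le _ _ _
    _ ≤ ε := by linarith

end MemDminus

/-- Lemma A.4: if the semivariation `A(f,δ)` tends to `0` as `δ → 0`, then
`f ∈ 𝓡_m([a,b],E)`: the Riemann integral `∫_a^b φ(t) f(t) dt` exists for every
`φ ∈ D⁻[a,b]`. -/
theorem riemann_integrable_of_semivariation {E : Type*} [NormedAddCommGroup E]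
    [NormedSpace ℝ E] [CompleteSpace E]
    {a b : ℝ} (hab : a < b) (f : ℝ → E)
    (hA : ∀ ε : ℝ, 0 < ε → ∃ δ : ℝ, 0 < δ ∧ ∀ (n : ℕ) (t c : ℕ → ℝ),
      t 0 = a → t n = b → (∀ i < n, t i < t (i + 1)) → (∀ i < n, |c i| ≤ δ) →
      ‖∑ i ∈ Finset.range n, c i • (f (t (i + 1)) - f (t i))‖ < ε) :
    ∀ φ : ℝ → ℝ, MemDminus a b φ →
      ∃ I : E, HasRiemannIntegral (fun t => φ t • f t) a b I := by
  intro φ hφ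
  refine hasRiemannIntegral_of_cauchy hab fun ε hε => ?_
  obtain ⟨η₀, hη₀, hf⟩ := hA (ε / 2) (half_pos hε)
  set η := min η₀ (ε / (2 * (‖f a‖ + 1)))
  have hη : 0 < η := lt_min hη₀ (by positivity)
  obtain ⟨δ, hδ, G, hG⟩ := hφ.exists_tail_approx hab.le (half_pos hη)
  refine ⟨δ, hδ, fun P P' hP hP' => ?_⟩
  have htail : ∀ s,
      |P.riemannSum ((Ici s).indicator φ) - P'.riemannSum ((Ici s).indicator φ)| ≤ η := by
    intro s
    have := abs_sub_le (P.riemannSum ((Ici s).indicator φ)) (G s)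
      (P'.riemannSum ((Ici s).indicator φ))
    rw [abs_sub_comm (G s)] at this
    linarith [hG P hP s, hG P' hP' s]
  have hfa : η * ‖f a‖ ≤ ε / 2 :=
    calc η * ‖f a‖ ≤ ε / (2 * (‖f a‖ + 1)) * (‖f a‖ + 1) :=
          mul_le_mul (min_le_right _ _) (by linarith) (norm_nonneg _) (by positivity)
      _ = ε / 2 := by field_simp
  have := P.norm_riemannSum_smul_sub_lt (fun Q c hc => hf Q.n Q.t c Q.t_zero Q.t_last Q.lt_succ
    fun i hi => (hc i hi).trans (min_le_left _ _)) P' htail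
  linarith
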